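/- Let q ≥ 5 and λ ∈ (0,1]. Suppose X is a boundary pair whose region R_X consists of the single vertex f_X. Then μ(X) ≤ (1−λ)/(q − 4(1−λ)). -/
import Mathlib


namespace PottsBP

/-- Vertices of the integer lattice ℤ². -/
abbrev V : Type := ℤ × ℤ

/-- Lattice adjacency on ℤ². -/
def Adj (x y : V) : Prop := (x.1 - y.1).natAbs + (x.2 - y.2).natAbs = 1

/-- `(u, v)` is a boundary edge of `R`, oriented with `u` outside `R` and `v` inside. -/
def IsBdryEdge (R : Finset V) (u v : V) : Prop := u ∉ R ∧ v ∈ R ∧ Adj u v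

/-- Configurations on region `R` with spins `{1,…,q}`, extended by `0` off `R`. -/
def Configs (q : ℕ) (R : Finset V) : Set (V → ℕ) :=
  {σ | (∀ v ∈ R, 1 ≤ σ v ∧ σ v ≤ q) ∧ ∀ v ∉ R, σ v = 0}

/-- A boundary pair: a nonempty finite region `R`, a distinguished boundary edge
`s = (w, f)` with `f ∈ R`, and a pair `(B, B')` of boundary configurations (maps from
boundary edges, represented by their (outside, inside) endpoint pairs, to `{0,…,q}`,
with `0` denoting a free edge) that differ only on `s`, assign spins from `{1,…,q}`
to `s`, and such that any two perpendicular boundary edges sharing their outside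
endpoint get the same spin in at least one of `B`, `B'`. -/
structure BoundaryPair (q : ℕ) where
  R : Finset V
  w : V
  f : V
  hw : w ∉ R
  hf : f ∈ R
  hadj : Adj w f
  B : V × V → ℕ
  B' : V × V → ℕ
  hBrange : ∀ u v, IsBdryEdge R u v → B (u, v) ≤ q
  hB'range : ∀ u v, IsBdryEdge R u v → B' (u, v) ≤ q
  hagree : ∀ u v, IsBdryEdge R u v → (u, v) ≠ (w, f) → B (u, v) = B' (u, v)
  hBs : 1 ≤ B (w, f) ∧ B (w, f) ≤ q
  hB's : 1 ≤ B' (w, f) ∧ B' (w, f) ≤ q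
  hperp : ∀ u v₁ v₂, IsBdryEdge R u v₁ → IsBdryEdge R u v₂ →
    (v₁.1 - u.1) * (v₂.1 - u.1) + (v₁.2 - u.2) * (v₂.2 - u.2) = 0 →
    B (u, v₁) = B (u, v₂) ∨ B' (u, v₁) = B' (u, v₂)

variable {q : ℕ}

/-- The number of monochromatic internal edges of `R` under `σ`. -/
noncomputable def monInt (R : Finset V) (σ : V → ℕ) : ℕ :=
  Set.ncard {e : Sym2 V | ∃ x y : V, e = s(x, y) ∧ Adj x y ∧ x ∈ R ∧ y ∈ R ∧ σ x = σ y}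

/-- `mon_σ(E(R_X) − {s_X})` for the boundary pair `X`: the number of monochromatic
edges, excluding the distinguished edge `s_X`, where a boundary edge is monochromatic
if its spin under `B_X` is in `{1,…,q}` and equals the spin `σ` gives its inner
endpoint. -/
noncomputable def monExS (X : BoundaryPair q) (σ : V → ℕ) : ℕ :=
  monInt X.R σ + Set.ncard {p : V × V | IsBdryEdge X.R p.1 p.2 ∧ p ≠ (X.w, X.f) ∧
    1 ≤ X.B p ∧ X.B p = σ p.2}

/-- `mon_σ(E(R_X))` with respect to an arbitrary boundary configuration `Bc`. -/
noncomputable def monFull (X : BoundaryPair q) (Bc : V × V → ℕ) (σ : V → ℕ) : ℕ :=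
  monInt X.R σ + Set.ncard {p : V × V | IsBdryEdge X.R p.1 p.2 ∧
    1 ≤ Bc p ∧ Bc p = σ p.2}

/-- `c_i`: the total weight (ignoring the edge `s_X`) of the configurations that
assign spin `i` to `f_X`. -/
noncomputable def ci (X : BoundaryPair q) (lam : ℝ) (i : ℕ) : ℝ :=
  ∑ᶠ σ ∈ {σ ∈ Configs q X.R | σ X.f = i}, lam ^ monExS X σ

/-- `c = Σ_{i ∉ C} c_i` where `C = {B_X(s_X), B'_X(s_X)}`. -/
noncomputable def cOut (X : BoundaryPair q) (lam : ℝ) : ℝ :=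
  ∑ i ∈ (Finset.Icc 1 q).filter
      (fun i => i ≠ X.B (X.w, X.f) ∧ i ≠ X.B' (X.w, X.f)), ci X lam i

/-- `μ(X) = max_{i ∈ C} (1−λ)c_i / ((1+λ)c_i + c)`. -/
noncomputable def mu (X : BoundaryPair q) (lam : ℝ) : ℝ :=
  max ((1 - lam) * ci X lam (X.B (X.w, X.f)) /
        ((1 + lam) * ci X lam (X.B (X.w, X.f)) + cOut X lam))
      ((1 - lam) * ci X lam (X.B' (X.w, X.f)) /
        ((1 + lam) * ci X lam (X.B' (X.w, X.f)) + cOut X lam))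

/-- The partition function of `X` with boundary configuration `Bc`. -/
noncomputable def Zbp (X : BoundaryPair q) (lam : ℝ) (Bc : V × V → ℕ) : ℝ :=
  ∑ᶠ σ ∈ Configs q X.R, lam ^ monFull X Bc σ

/-- The Gibbs distribution `π_{Bc}` on configurations of `R_X`. -/
noncomputable def gibbsbp (X : BoundaryPair q) (lam : ℝ) (Bc : V × V → ℕ)
    (σ : V → ℕ) : ℝ :=
  lam ^ monFull X Bc σ / Zbp X lam Bc

/-- `ψ` is a coupling of `π_{B_X}` and `π_{B'_X}`. -/
def IsCoupling (X : BoundaryPair q) (lam : ℝ)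
    (ψ : (V → ℕ) × (V → ℕ) → ℝ) : Prop :=
  (∀ p, 0 ≤ ψ p) ∧
  (∀ p : (V → ℕ) × (V → ℕ),
    (p.1 ∉ Configs q X.R ∨ p.2 ∉ Configs q X.R) → ψ p = 0) ∧
  (∀ σ ∈ Configs q X.R, (∑ᶠ σ' ∈ Configs q X.R, ψ (σ, σ')) = gibbsbp X lam X.B σ) ∧
  (∀ σ' ∈ Configs q X.R, (∑ᶠ σ ∈ Configs q X.R, ψ (σ, σ')) = gibbsbp X lam X.B' σ')

/-- The probability that a pair drawn from `ψ` disagrees at `f_X`. -/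
noncomputable def disagree (X : BoundaryPair q)
    (ψ : (V → ℕ) × (V → ℕ) → ℝ) : ℝ :=
  ∑ᶠ p ∈ {p : (V → ℕ) × (V → ℕ) | p.1 X.f ≠ p.2 X.f}, ψ p

/-- `ν(X)`: the minimum, over couplings `ψ` of `π_{B_X}` and `π_{B'_X}`, of the
probability that a pair drawn from `ψ` disagrees at `f_X`. -/
noncomputable def nu (X : BoundaryPair q) (lam : ℝ) : ℝ :=
  sInf {r : ℝ | ∃ ψ, IsCoupling X lam ψ ∧ r = disagree X ψ}

end PottsBP

open PottsBP

/-- The four lattice neighbours of a vertex. -/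
private def nbrs (f : V) : Finset V :=
  {(f.1 + 1, f.2), (f.1 - 1, f.2), (f.1, f.2 + 1), (f.1, f.2 - 1)}

private lemma mem_nbrs {u f : V} : u ∈ nbrs f ↔ Adj u f := by
  simp only [nbrs, Finset.mem_insert, Finset.mem_singleton, Prod.ext_iff, Adj]
  omega

private lemma adj_ne {u f : V} (h : Adj u f) : u ≠ f := by
  intro he; subst he; simp [Adj] at h

private lemma card_nbrs (f : V) : (nbrs f).card = 4 := by
  simp only [nbrs]
  rw [Finset.card_insert_of_notMem, Finset.card_insert_of_notMem,
    Finset.card_insert_of_notMem, Finset.card_singleton]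
  · simp only [Finset.mem_singleton, Prod.ext_iff]; omega
  · simp only [Finset.mem_insert, Finset.mem_singleton, Prod.ext_iff]; omega
  · simp only [Finset.mem_insert, Finset.mem_singleton, Prod.ext_iff]; omega
private lemma ci_eval {q : ℕ} (lam : ℝ) (X : BoundaryPair q) (hR : X.R = {X.f})
    {i : ℕ} (hi1 : 1 ≤ i) (hiq : i ≤ q) :
    ci X lam i = lam ^ (((((nbrs X.f).erase X.w) ×ˢ ({X.f} : Finset V)).filter
      (fun p => 1 ≤ X.B p ∧ X.B p = i)).card) := by
  set σ₀ : V → ℕ := fun v => if v = X.f then i else 0 with hσ₀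
  have hσf : σ₀ X.f = i := by simp [σ₀]
  have hset : {σ ∈ Configs q X.R | σ X.f = i} = {σ₀} := by
    ext σ
    simp only [Set.mem_setOf_eq, Set.mem_singleton_iff, Configs, hR, Finset.mem_singleton]
    constructor
    · rintro ⟨⟨h1, h2⟩, h3⟩
      funext v
      by_cases hv : v = X.f
      · subst hv; simp [σ₀, h3]
      · simp [σ₀, hv, h2 v hv]
    · rintro rfl
      refine ⟨⟨fun v hv => ?_, fun v hv => ?_⟩, hσf⟩
      · subst hv; rw [hσf]; exact ⟨hi1, hiq⟩
      · simp [σ₀, hv]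
  rw [ci, hset, finsum_mem_singleton]
  congr 1
  rw [monExS]
  have hmonInt : monInt X.R σ₀ = 0 := by
    rw [monInt]
    convert Set.ncard_empty (Sym2 V)
    ext e
    simp only [Set.mem_setOf_eq, Set.mem_empty_iff_false, iff_false]
    rintro ⟨x, y, -, hadj, hx, hy, -⟩
    rw [hR, Finset.mem_singleton] at hx hy
    subst hx; subst hy
    exact adj_ne hadj rfl
  rw [hmonInt, zero_add]
  rw [← Set.ncard_coe_finset]
  congr 1
  ext ⟨u, v⟩
  simp only [Set.mem_setOf_eq, Finset.coe_filter, Finset.mem_product, Finset.mem_erase,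
    Finset.mem_singleton, IsBdryEdge, hR, Finset.mem_singleton, mem_nbrs, ne_eq,
    Prod.mk.injEq, not_and]
  constructor
  · rintro ⟨⟨hu, rfl, hadj⟩, hne, hb1, hb2⟩
    exact ⟨⟨⟨fun hw => (hne hw rfl).elim, hadj⟩, rfl⟩, hb1, by rwa [hσf] at hb2⟩
  · rintro ⟨⟨⟨hne, hadj⟩, rfl⟩, hb1, hb2⟩
    exact ⟨⟨fun h => adj_ne hadj h, rfl, hadj⟩, fun hw _ => hne hw, hb1, by rwa [hσf]⟩
open PottsBP in
/-- Let `q ≥ 5` and `λ ∈ (0,1]`. If `X` is a boundary pair whose region consists of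
the single vertex `f_X`, then `μ(X) ≤ (1−λ)/(q − 4(1−λ))`. -/
theorem mu_single_vertex_q_ge_five (q : ℕ) (hq : 5 ≤ q) (lam : ℝ)
    (hlam0 : 0 < lam) (hlam1 : lam ≤ 1)
    (X : BoundaryPair q) (hR : X.R = {X.f}) :
    mu X lam ≤ (1 - lam) / ((q : ℝ) - 4 * (1 - lam)) := by
  set T : Finset (V × V) := ((nbrs X.f).erase X.w) ×ˢ ({X.f} : Finset V) with hT
  set k : ℕ → ℕ := fun i => (T.filter (fun p => 1 ≤ X.B p ∧ X.B p = i)).card with hk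
  have hwmem : X.w ∈ nbrs X.f := mem_nbrs.mpr X.hadj
  have hTcard : T.card = 3 := by
    rw [hT, Finset.card_product, Finset.card_singleton,
      Finset.card_erase_of_mem hwmem, card_nbrs]
  have hci_eval : ∀ i, 1 ≤ i → i ≤ q → ci X lam i = lam ^ k i := fun i h1 h2 =>
    ci_eval lam X hR h1 h2
  set F : Finset ℕ := (Finset.Icc 1 q).filter
    (fun i => i ≠ X.B (X.w, X.f) ∧ i ≠ X.B' (X.w, X.f)) with hF
  have hcOutF : cOut X lam = ∑ i ∈ F, ci X lam i := rfl
  -- card of F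
  have hFcard : q - 2 ≤ F.card := by
    have hsplit := Finset.card_filter_add_card_filter_not
      (s := Finset.Icc 1 q) (p := fun i => i ≠ X.B (X.w, X.f) ∧ i ≠ X.B' (X.w, X.f))
    rw [← hF] at hsplit
    have hsub : (Finset.Icc 1 q).filter
        (fun i => ¬(i ≠ X.B (X.w, X.f) ∧ i ≠ X.B' (X.w, X.f))) ⊆
        {X.B (X.w, X.f), X.B' (X.w, X.f)} := by
      intro i hi
      rw [Finset.mem_filter] at hi
      simp only [Finset.mem_insert, Finset.mem_singleton]
      tauto
    have h2 := Finset.card_le_card hsub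
    have h3 : ({X.B (X.w, X.f), X.B' (X.w, X.f)} : Finset ℕ).card ≤ 2 :=
      Finset.card_insert_le _ _ |>.trans (by simp)
    have h4 : (Finset.Icc 1 q).card = q := by rw [Nat.card_Icc]; omega
    omega
  -- sum of k over F
  have hsumk : ∑ i ∈ F, k i ≤ 3 := by
    have h1 : ∑ i ∈ F, k i
        = ∑ p ∈ T, ∑ i ∈ F, (if 1 ≤ X.B p ∧ X.B p = i then 1 else 0) := by
      simp only [hk, Finset.card_filter]
      rw [Finset.sum_comm]
    have h2 : ∀ p ∈ T, (∑ i ∈ F, (if 1 ≤ X.B p ∧ X.B p = i then 1 else 0)) ≤ 1 := by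
      intro p _
      have h3 : (∑ i ∈ F, (if 1 ≤ X.B p ∧ X.B p = i then 1 else 0))
          ≤ ∑ i ∈ F, (if X.B p = i then 1 else 0) :=
        Finset.sum_le_sum (fun i _ => by split_ifs <;> simp_all)
      have h4 : (∑ i ∈ F, (if X.B p = i then (1:ℕ) else 0))
          = if X.B p ∈ F then 1 else 0 := Finset.sum_ite_eq F (X.B p) (fun _ => 1)
      have h5 : (if X.B p ∈ F then (1:ℕ) else 0) ≤ 1 := by split_ifs <;> simp
      omega
    calc ∑ i ∈ F, k i
        = ∑ p ∈ T, ∑ i ∈ F, (if 1 ≤ X.B p ∧ X.B p = i then 1 else 0) := h1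
      _ ≤ ∑ p ∈ T, 1 := Finset.sum_le_sum h2
      _ = 3 := by rw [Finset.sum_const, hTcard]; rfl
  -- lower bound on cOut
  have hq5 : (5 : ℝ) ≤ (q : ℝ) := by exact_mod_cast hq
  have hcOut_ge : (q : ℝ) - 5 + 3 * lam ≤ cOut X lam := by
    have h1 : ∀ i ∈ F, (1 : ℝ) + (k i : ℝ) * (lam - 1) ≤ ci X lam i := by
      intro i hi
      rw [hF, Finset.mem_filter, Finset.mem_Icc] at hi
      rw [hci_eval i hi.1.1 hi.1.2]
      have h := one_add_mul_le_pow (a := lam - 1) (by linarith) (k i)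
      rw [show (1:ℝ) + (lam - 1) = lam by ring] at h
      exact h
    have h2 : ∑ i ∈ F, ((1:ℝ) + (k i : ℝ) * (lam - 1)) ≤ ∑ i ∈ F, ci X lam i :=
      Finset.sum_le_sum h1
    have h3 : ∑ i ∈ F, ((1:ℝ) + (k i : ℝ) * (lam - 1))
        = (F.card : ℝ) + (∑ i ∈ F, (k i : ℝ)) * (lam - 1) := by
      rw [Finset.sum_add_distrib, Finset.sum_const, nsmul_eq_mul, mul_one,
        ← Finset.sum_mul]
    have h5 : (2:ℕ) ≤ q := by omega
    have hc1 : (q : ℝ) - 2 ≤ (F.card : ℝ) := by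
      have h6 : ((q - 2 : ℕ) : ℝ) ≤ (F.card : ℝ) := Nat.cast_le.mpr hFcard
      rw [Nat.cast_sub h5] at h6
      exact_mod_cast h6
    have hc2 : (∑ i ∈ F, (k i : ℝ)) ≤ 3 := by
      have : ((∑ i ∈ F, k i : ℕ) : ℝ) ≤ 3 := by exact_mod_cast hsumk
      rwa [Nat.cast_sum] at this
    have hc3 : (0:ℝ) ≤ ∑ i ∈ F, (k i : ℝ) :=
      Finset.sum_nonneg (fun i _ => Nat.cast_nonneg _)
    rw [hcOutF]
    nlinarith [mul_nonneg (sub_nonneg.2 hc2) (sub_nonneg.2 hlam1)]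
  -- key bound for i in C
  have key : ∀ i, 1 ≤ i → i ≤ q →
      (1 - lam) * ci X lam i / ((1 + lam) * ci X lam i + cOut X lam)
        ≤ (1 - lam) / ((q : ℝ) - 4 * (1 - lam)) := by
    intro i hi1 hiq
    have hci : ci X lam i = lam ^ k i := hci_eval i hi1 hiq
    have hpos : 0 < ci X lam i := hci ▸ pow_pos hlam0 _
    have hle1 : ci X lam i ≤ 1 := hci ▸ pow_le_one₀ hlam0.le hlam1
    have hE : 0 < (q : ℝ) - 4 * (1 - lam) := by linarith
    have hD : 0 < (1 + lam) * ci X lam i + cOut X lam := by nlinarith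
    rw [div_le_div_iff₀ hD hE]
    have hM0 : (0:ℝ) ≤ (q : ℝ) - 5 + 3 * lam := by linarith
    have hstep : ci X lam i * ((q : ℝ) - 5 + 3 * lam) ≤ cOut X lam :=
      le_trans (by nlinarith) hcOut_ge
    nlinarith [mul_nonneg (sub_nonneg.2 hlam1) (sub_nonneg.2 hstep)]
  rw [mu]
  exact max_le (key _ X.hBs.1 X.hBs.2) (key _ X.hB's.1 X.hB's.2)
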